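/- Let U ⊆ ℝ² be open and connected, and assume that at every point p ∈ U the symmetrized Ricci tensor ρ^{D,sym}(p) of D is nonzero (i.e., ρ^{D,sym}_{ij}(p) ≠ 0 for some i, j). If f : U × ℝ² → ℝ is smooth and λ ∈ ℝ satisfy the gradient Ricci soliton equation Hes_f(∂_a, ∂_b) + ρ_{ab} = λ g_{ab} on U × ℝ² for the deformed Riemannian extension g_{D,Φ}, then λ = 0 (the soliton is steady), f is independent of the fiber coordinates, i.e. f(x¹, x², x₁', x₂') = h(x¹, x²) for a smooth h : U → ℝ, and h satisfies the affine gradient Ricci soliton equation ∂_i∂_j h − Σ_k Γ^k_{ij} ∂_k h + 2 ρ^{D,sym}_{ij} = 0 on U. -/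

import Mathlib

noncomputable section

/-- Points of the affine surface `Σ` (local coordinates `(x¹,x²)`). -/
abbrev Pt2 := Fin 2 → ℝ
/-- Points of the cotangent bundle `T*Σ` (coordinates `(x¹,x²,x₁',x₂')`). -/
abbrev Pt4 := Fin 4 → ℝ

/-- Projection to the base coordinates. -/
def base (p : Pt4) : Pt2 := ![p 0, p 1]

/-- Unprimed index `i ∈ {1,2}` as an index in `{1,2,1',2'}`. -/
def unp (i : Fin 2) : Fin 4 := ⟨i.1, by omega⟩
/-- Primed index `i' ∈ {1',2'}` as an index in `{1,2,1',2'}`. -/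
def pr (i : Fin 2) : Fin 4 := ⟨i.1 + 2, by omega⟩

/-- Partial derivative `∂_{x^i}` on the surface. -/
def pd2 (i : Fin 2) (f : Pt2 → ℝ) (p : Pt2) : ℝ :=
  fderiv ℝ f p (Pi.single i 1)

/-- Partial derivative `∂_a` on the cotangent bundle. -/
def pd4 (a : Fin 4) (f : Pt4 → ℝ) (p : Pt4) : ℝ :=
  fderiv ℝ f p (Pi.single a 1)

/-- The component `𝚪^{k'}_{ij}` of the Levi-Civita connection of a deformed
Riemannian extension. -/
def GammaPr (Γ : Fin 2 → Fin 2 → Fin 2 → Pt2 → ℝ) (Φ : Fin 2 → Fin 2 → Pt2 → ℝ)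
    (k i j : Fin 2) (p : Pt4) : ℝ :=
  (∑ r : Fin 2, p (pr r) *
      (pd2 k (Γ r i j) (base p) - pd2 i (Γ r j k) (base p) - pd2 j (Γ r i k) (base p)
        + 2 * ∑ l : Fin 2, Γ r k l (base p) * Γ l i j (base p)))
    + (1 / 2) * (pd2 i (Φ j k) (base p) + pd2 j (Φ i k) (base p) - pd2 k (Φ i j) (base p))
    - ∑ l : Fin 2, Φ k l (base p) * Γ l i j (base p)

/-- The Christoffel symbols `𝚪^a_{bc}` of the Levi-Civita connection of the deformed
Riemannian extension `g_{D,Φ}`:  `𝚪^k_{ij} = Γ^k_{ij}`, `𝚪^{k'}_{i'j} = 𝚪^{k'}_{j i'} = −Γ^i_{jk}`,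
`𝚪^{k'}_{ij} = GammaPr`, and all other coefficients zero. -/
def GG (Γ : Fin 2 → Fin 2 → Fin 2 → Pt2 → ℝ) (Φ : Fin 2 → Fin 2 → Pt2 → ℝ)
    (a b c : Fin 4) (p : Pt4) : ℝ :=
  if ha : a.1 < 2 then
    if hb : b.1 < 2 then
      if hc : c.1 < 2 then Γ ⟨a.1, ha⟩ ⟨b.1, hb⟩ ⟨c.1, hc⟩ (base p) else 0
    else 0
  else
    if hb : b.1 < 2 then
      if hc : c.1 < 2 then GammaPr Γ Φ ⟨a.1 - 2, by omega⟩ ⟨b.1, hb⟩ ⟨c.1, hc⟩ p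
      else -Γ ⟨c.1 - 2, by omega⟩ ⟨b.1, hb⟩ ⟨a.1 - 2, by omega⟩ (base p)
    else
      if hc : c.1 < 2 then -Γ ⟨b.1 - 2, by omega⟩ ⟨c.1, hc⟩ ⟨a.1 - 2, by omega⟩ (base p)
      else 0

/-- The deformed Riemannian extension metric `g_{D,Φ}`:
`g_{ij} = Φ_{ij} − 2(x₁' Γ¹_{ij} + x₂' Γ²_{ij})`, `g_{i j'} = g_{j' i} = δ_i^j`, `g_{i'j'} = 0`. -/
def gDE (Γ : Fin 2 → Fin 2 → Fin 2 → Pt2 → ℝ) (Φ : Fin 2 → Fin 2 → Pt2 → ℝ)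
    (a b : Fin 4) (p : Pt4) : ℝ :=
  if ha : a.1 < 2 then
    if hb : b.1 < 2 then
      Φ ⟨a.1, ha⟩ ⟨b.1, hb⟩ (base p)
        - 2 * ∑ r : Fin 2, p (pr r) * Γ r ⟨a.1, ha⟩ ⟨b.1, hb⟩ (base p)
    else if b.1 = a.1 + 2 then 1 else 0
  else
    if b.1 < 2 then (if a.1 = b.1 + 2 then 1 else 0) else 0

/-- The Ricci tensor `ρ_{ab}` of `g_{D,Φ}`, computed from its Christoffel symbols. -/
def ricci4 (Γ : Fin 2 → Fin 2 → Fin 2 → Pt2 → ℝ) (Φ : Fin 2 → Fin 2 → Pt2 → ℝ)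
    (a b : Fin 4) (p : Pt4) : ℝ :=
  (∑ c : Fin 4, pd4 c (GG Γ Φ c a b) p) - pd4 a (fun q => ∑ c : Fin 4, GG Γ Φ c c b q) p
    + ∑ c : Fin 4, ∑ d : Fin 4,
        (GG Γ Φ c c d p * GG Γ Φ d a b p - GG Γ Φ c a d p * GG Γ Φ d c b p)

/-- The Hessian `Hes_f(∂_a,∂_b) = ∂_a∂_b f − Σ_c 𝚪^c_{ab} ∂_c f` on `T*Σ`. -/
def hess4 (Γ : Fin 2 → Fin 2 → Fin 2 → Pt2 → ℝ) (Φ : Fin 2 → Fin 2 → Pt2 → ℝ)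
    (f : Pt4 → ℝ) (a b : Fin 4) (p : Pt4) : ℝ :=
  pd4 a (pd4 b f) p - ∑ c : Fin 4, GG Γ Φ c a b p * pd4 c f p

/-- The Ricci tensor `ρ^D_{ij}` of the affine connection `D` on the surface. -/
def ricciD (Γ : Fin 2 → Fin 2 → Fin 2 → Pt2 → ℝ) (i j : Fin 2) (p : Pt2) : ℝ :=
  (∑ k : Fin 2, pd2 k (Γ k i j) p) - pd2 i (fun q => ∑ k : Fin 2, Γ k k j q) p
    + ∑ k : Fin 2, ∑ l : Fin 2, (Γ k k l p * Γ l i j p - Γ k i l p * Γ l k j p)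

/-- The symmetrized Ricci tensor `ρ^{D,sym}_{ij}` of `D`. -/
def ricciDSym (Γ : Fin 2 → Fin 2 → Fin 2 → Pt2 → ℝ) (i j : Fin 2) (p : Pt2) : ℝ :=
  (ricciD Γ i j p + ricciD Γ j i p) / 2

/-- The affine Hessian `Hes^D_h(∂_i,∂_j) = ∂_i∂_j h − Σ_k Γ^k_{ij} ∂_k h` on the surface. -/
def hessD (Γ : Fin 2 → Fin 2 → Fin 2 → Pt2 → ℝ) (h : Pt2 → ℝ) (i j : Fin 2) (p : Pt2) : ℝ :=
  pd2 i (pd2 j h) p - ∑ k : Fin 2, Γ k i j p * pd2 k h p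

/-- Projection `Pt4 → Pt2` as a continuous linear map. -/
def baseL : Pt4 →L[ℝ] Pt2 :=
  ContinuousLinearMap.pi ![ContinuousLinearMap.proj 0, ContinuousLinearMap.proj 1]

/-- Inclusion `x ↦ (x,0)` as a continuous linear map. -/
def bInclL : Pt2 →L[ℝ] Pt4 :=
  ContinuousLinearMap.pi ![ContinuousLinearMap.proj 0, ContinuousLinearMap.proj 1, 0, 0]

/-- Inclusion `v ↦ (0,v)` as a continuous linear map. -/
def inclL : Pt2 →L[ℝ] Pt4 :=
  ContinuousLinearMap.pi ![0, 0, ContinuousLinearMap.proj 0, ContinuousLinearMap.proj 1]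

/-- The point with base coordinates `x` and fiber coordinates `v`. -/
def glue (x v : Pt2) : Pt4 := ![x 0, x 1, v 0, v 1]

lemma base_eq (q : Pt4) : base q = baseL q := by
  funext i
  fin_cases i <;> simp [base, baseL]

lemma base_glue (x v : Pt2) : base (glue x v) = x := by
  funext i; fin_cases i <;> simp [base, glue]

lemma pr_zero : pr 0 = (2 : Fin 4) := rfl
lemma pr_one : pr 1 = (3 : Fin 4) := rfl
lemma unp_zero : unp 0 = (0 : Fin 4) := rfl
lemma unp_one : unp 1 = (1 : Fin 4) := rfl

lemma glue_pr (x v : Pt2) (r : Fin 2) : glue x v (pr r) = v r := by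
  fin_cases r
  · show glue x v 2 = v 0; simp [glue]
  · show glue x v 3 = v 1; simp [glue]

lemma glue_eq (x v : Pt2) : glue x v = bInclL x + inclL v := by
  funext a
  fin_cases a <;> simp [glue, bInclL, inclL]

lemma glue_base_fib (q : Pt4) : glue (base q) (fun r => q (pr r)) = q := by
  funext a
  fin_cases a <;> simp [glue, base, pr] <;> rfl

lemma baseL_single_unp (i : Fin 2) : baseL (Pi.single (unp i) 1) = Pi.single i 1 := by
  funext j
  fin_cases i <;> fin_cases j <;>
    simp [baseL, unp_zero, unp_one, Pi.single_apply] <;> rfl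

lemma baseL_single_pr (i : Fin 2) : baseL (Pi.single (pr i) 1) = 0 := by
  funext j
  fin_cases i <;> fin_cases j <;>
    simp [baseL, pr_zero, pr_one, Pi.single_apply] <;> rfl

lemma bInclL_single (i : Fin 2) : bInclL (Pi.single i 1) = Pi.single (unp i) 1 := by
  funext a
  fin_cases a <;> fin_cases i <;>
    simp [bInclL, unp_zero, unp_one, Pi.single_apply] <;> rfl

lemma inclL_single (i : Fin 2) : inclL (Pi.single i 1) = Pi.single (pr i) 1 := by
  funext a
  fin_cases a <;> fin_cases i <;>
    simp [inclL, pr_zero, pr_one, Pi.single_apply] <;> rfl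
lemma pd4_of_hasFDerivAt {f : Pt4 → ℝ} {L : Pt4 →L[ℝ] ℝ} {p : Pt4}
    (h : HasFDerivAt f L p) (a : Fin 4) : pd4 a f p = L (Pi.single a 1) := by
  unfold pd4; rw [h.fderiv]

lemma pd2_of_hasFDerivAt {f : Pt2 → ℝ} {L : Pt2 →L[ℝ] ℝ} {p : Pt2}
    (h : HasFDerivAt f L p) (i : Fin 2) : pd2 i f p = L (Pi.single i 1) := by
  unfold pd2; rw [h.fderiv]

lemma pd4_congr_nhds {f g : Pt4 → ℝ} {p : Pt4} (h : f =ᶠ[nhds p] g) (a : Fin 4) :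
    pd4 a f p = pd4 a g p := by unfold pd4; rw [h.fderiv_eq]

lemma pd2_congr_nhds {f g : Pt2 → ℝ} {p : Pt2} (h : f =ᶠ[nhds p] g) (i : Fin 2) :
    pd2 i f p = pd2 i g p := by unfold pd2; rw [h.fderiv_eq]

lemma pd4_const (c : ℝ) (a : Fin 4) (p : Pt4) : pd4 a (fun _ => c) p = 0 := by
  unfold pd4; rw [fderiv_fun_const]; simp

lemma pd2_const (c : ℝ) (i : Fin 2) (p : Pt2) : pd2 i (fun _ => c) p = 0 := by
  unfold pd2; rw [fderiv_fun_const]; simp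

lemma pd2_add {f g : Pt2 → ℝ} {p : Pt2} (hf : DifferentiableAt ℝ f p)
    (hg : DifferentiableAt ℝ g p) (i : Fin 2) :
    pd2 i (fun y => f y + g y) p = pd2 i f p + pd2 i g p := by
  unfold pd2; rw [fderiv_fun_add hf hg]; simp

lemma pd2_sub {f g : Pt2 → ℝ} {p : Pt2} (hf : DifferentiableAt ℝ f p)
    (hg : DifferentiableAt ℝ g p) (i : Fin 2) :
    pd2 i (fun y => f y - g y) p = pd2 i f p - pd2 i g p := by
  unfold pd2; rw [fderiv_fun_sub hf hg]; simp

lemma pd2_mul {f g : Pt2 → ℝ} {p : Pt2} (hf : DifferentiableAt ℝ f p)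
    (hg : DifferentiableAt ℝ g p) (i : Fin 2) :
    pd2 i (fun y => f y * g y) p = f p * pd2 i g p + g p * pd2 i f p := by
  unfold pd2; rw [fderiv_fun_mul hf hg]; simp

/-- Composition with the projection `baseL`. -/
lemma hasFDerivAt_base {F : Pt2 → ℝ} {p : Pt4} (hF : DifferentiableAt ℝ F (base p)) :
    HasFDerivAt (fun q => F (base q)) ((fderiv ℝ F (base p)).comp baseL) p := by
  have : (fun q : Pt4 => F (base q)) = F ∘ baseL := funext fun q => by rw [base_eq]; rfl
  rw [this]
  have h1 : HasFDerivAt F (fderiv ℝ F (base p)) (baseL p) := by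
    rw [← base_eq]; exact hF.hasFDerivAt
  exact h1.comp p (baseL.hasFDerivAt)

lemma pd4_base_unp {F : Pt2 → ℝ} {p : Pt4} (hF : DifferentiableAt ℝ F (base p)) (i : Fin 2) :
    pd4 (unp i) (fun q => F (base q)) p = pd2 i F (base p) := by
  rw [pd4_of_hasFDerivAt (hasFDerivAt_base hF)]
  simp [ContinuousLinearMap.comp_apply, baseL_single_unp, pd2]

lemma pd4_base_pr {F : Pt2 → ℝ} {p : Pt4} (hF : DifferentiableAt ℝ F (base p)) (k : Fin 2) :
    pd4 (pr k) (fun q => F (base q)) p = 0 := by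
  rw [pd4_of_hasFDerivAt (hasFDerivAt_base hF)]
  simp [ContinuousLinearMap.comp_apply, baseL_single_pr]

/-- Derivatives of the standard fiber-affine expression. -/
lemma pd4_affine_pr (C : Fin 2 → Pt2 → ℝ) (D : Pt2 → ℝ) {p : Pt4}
    (hC : ∀ r, DifferentiableAt ℝ (C r) (base p)) (hD : DifferentiableAt ℝ D (base p))
    (k : Fin 2) :
    pd4 (pr k) (fun q => (∑ r : Fin 2, q (pr r) * C r (base q)) + D (base q)) p
      = C k (base p) := by
  have hc0 : HasFDerivAt (fun q : Pt4 => q (pr 0))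
      (ContinuousLinearMap.proj (R := ℝ) (φ := fun _ : Fin 4 => ℝ) (pr 0)) p := by
    have key : (fun q : Pt4 => q (pr 0))
        = ⇑(ContinuousLinearMap.proj (R := ℝ) (φ := fun _ : Fin 4 => ℝ) (pr 0)) := rfl
    rw [key]; exact ContinuousLinearMap.hasFDerivAt _
  have hc1 : HasFDerivAt (fun q : Pt4 => q (pr 1))
      (ContinuousLinearMap.proj (R := ℝ) (φ := fun _ : Fin 4 => ℝ) (pr 1)) p := by
    have key : (fun q : Pt4 => q (pr 1))
        = ⇑(ContinuousLinearMap.proj (R := ℝ) (φ := fun _ : Fin 4 => ℝ) (pr 1)) := rfl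
    rw [key]; exact ContinuousLinearMap.hasFDerivAt _
  have h0 : HasFDerivAt (fun q : Pt4 => q (pr 0) * C 0 (base q))
      (p (pr 0) • ((fderiv ℝ (C 0) (base p)).comp baseL)
        + C 0 (base p) • (ContinuousLinearMap.proj (R := ℝ) (φ := fun _ : Fin 4 => ℝ) (pr 0))) p :=
    hc0.mul (hasFDerivAt_base (hC 0))
  have h1 : HasFDerivAt (fun q : Pt4 => q (pr 1) * C 1 (base q))
      (p (pr 1) • ((fderiv ℝ (C 1) (base p)).comp baseL)
        + C 1 (base p) • (ContinuousLinearMap.proj (R := ℝ) (φ := fun _ : Fin 4 => ℝ) (pr 1))) p :=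
    hc1.mul (hasFDerivAt_base (hC 1))
  have hG : HasFDerivAt
      (fun q => (∑ r : Fin 2, q (pr r) * C r (base q)) + D (base q))
      (((p (pr 0) • ((fderiv ℝ (C 0) (base p)).comp baseL)
          + C 0 (base p) • (ContinuousLinearMap.proj (R := ℝ) (φ := fun _ : Fin 4 => ℝ) (pr 0)))
        + (p (pr 1) • ((fderiv ℝ (C 1) (base p)).comp baseL)
          + C 1 (base p) • (ContinuousLinearMap.proj (R := ℝ) (φ := fun _ : Fin 4 => ℝ) (pr 1))))
        + (fderiv ℝ D (base p)).comp baseL) p := by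
    have := (h0.add h1).add (hasFDerivAt_base hD)
    simpa [Fin.sum_univ_two, Pi.add_def] using this
  rw [pd4_of_hasFDerivAt hG]
  have e1 : baseL (Pi.single (pr k) 1) = 0 := baseL_single_pr k
  have e2 : ∀ r : Fin 2, (Pi.single (pr k) 1 : Pt4) (pr r) = if r = k then 1 else 0 := by
    intro r
    rw [Pi.single_apply]
    congr 1
    simp only [eq_iff_iff]
    constructor
    · intro h; ext; have := congrArg Fin.val h; simpa [pr] using this
    · rintro rfl; rfl
  simp only [ContinuousLinearMap.add_apply, ContinuousLinearMap.coe_smul', Pi.smul_apply,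
    ContinuousLinearMap.comp_apply, ContinuousLinearMap.proj_apply, e1, e2, map_zero,
    smul_eq_mul, mul_zero, add_zero, zero_add, mul_ite, mul_one]
  fin_cases k <;> norm_num

lemma pd4_affine_unp (C : Fin 2 → Pt2 → ℝ) (D : Pt2 → ℝ) {p : Pt4}
    (hC : ∀ r, DifferentiableAt ℝ (C r) (base p)) (hD : DifferentiableAt ℝ D (base p))
    (i : Fin 2) :
    pd4 (unp i) (fun q => (∑ r : Fin 2, q (pr r) * C r (base q)) + D (base q)) p
      = (∑ r : Fin 2, p (pr r) * pd2 i (C r) (base p)) + pd2 i D (base p) := by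
  have hc0 : HasFDerivAt (fun q : Pt4 => q (pr 0))
      (ContinuousLinearMap.proj (R := ℝ) (φ := fun _ : Fin 4 => ℝ) (pr 0)) p := by
    have key : (fun q : Pt4 => q (pr 0))
        = ⇑(ContinuousLinearMap.proj (R := ℝ) (φ := fun _ : Fin 4 => ℝ) (pr 0)) := rfl
    rw [key]; exact ContinuousLinearMap.hasFDerivAt _
  have hc1 : HasFDerivAt (fun q : Pt4 => q (pr 1))
      (ContinuousLinearMap.proj (R := ℝ) (φ := fun _ : Fin 4 => ℝ) (pr 1)) p := by
    have key : (fun q : Pt4 => q (pr 1))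
        = ⇑(ContinuousLinearMap.proj (R := ℝ) (φ := fun _ : Fin 4 => ℝ) (pr 1)) := rfl
    rw [key]; exact ContinuousLinearMap.hasFDerivAt _
  have h0 : HasFDerivAt (fun q : Pt4 => q (pr 0) * C 0 (base q))
      (p (pr 0) • ((fderiv ℝ (C 0) (base p)).comp baseL)
        + C 0 (base p) • (ContinuousLinearMap.proj (R := ℝ) (φ := fun _ : Fin 4 => ℝ) (pr 0))) p :=
    hc0.mul (hasFDerivAt_base (hC 0))
  have h1 : HasFDerivAt (fun q : Pt4 => q (pr 1) * C 1 (base q))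
      (p (pr 1) • ((fderiv ℝ (C 1) (base p)).comp baseL)
        + C 1 (base p) • (ContinuousLinearMap.proj (R := ℝ) (φ := fun _ : Fin 4 => ℝ) (pr 1))) p :=
    hc1.mul (hasFDerivAt_base (hC 1))
  have hG : HasFDerivAt
      (fun q => (∑ r : Fin 2, q (pr r) * C r (base q)) + D (base q))
      (((p (pr 0) • ((fderiv ℝ (C 0) (base p)).comp baseL)
          + C 0 (base p) • (ContinuousLinearMap.proj (R := ℝ) (φ := fun _ : Fin 4 => ℝ) (pr 0)))
        + (p (pr 1) • ((fderiv ℝ (C 1) (base p)).comp baseL)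
          + C 1 (base p) • (ContinuousLinearMap.proj (R := ℝ) (φ := fun _ : Fin 4 => ℝ) (pr 1))))
        + (fderiv ℝ D (base p)).comp baseL) p := by
    have := (h0.add h1).add (hasFDerivAt_base hD)
    simpa [Fin.sum_univ_two, Pi.add_def] using this
  rw [pd4_of_hasFDerivAt hG]
  have e1 : baseL (Pi.single (unp i) 1) = Pi.single i 1 := baseL_single_unp i
  have e2 : ∀ r : Fin 2, (Pi.single (unp i) 1 : Pt4) (pr r) = 0 := by
    intro r
    rw [Pi.single_apply, if_neg]
    intro h; have := congrArg Fin.val h; simp [pr, unp] at this; omega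
  simp only [ContinuousLinearMap.add_apply, ContinuousLinearMap.coe_smul', Pi.smul_apply,
    ContinuousLinearMap.comp_apply, ContinuousLinearMap.proj_apply, e1, e2, map_zero,
    smul_eq_mul, mul_zero, add_zero, zero_add, Fin.sum_univ_two]
  simp [pd2]
lemma contDiffOn_pd2 {F : Pt2 → ℝ} {U : Set Pt2} (hU : IsOpen U)
    (hF : ContDiffOn ℝ (⊤ : ℕ∞) F U) (i : Fin 2) : ContDiffOn ℝ (⊤ : ℕ∞) (pd2 i F) U := by
  have h1 : ContDiffOn ℝ (⊤ : ℕ∞) (fderiv ℝ F) U := hF.fderiv_of_isOpen hU (by simp)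
  exact h1.clm_apply contDiffOn_const

lemma contDiffOn_pd4 {F : Pt4 → ℝ} {S : Set Pt4} (hS : IsOpen S)
    (hF : ContDiffOn ℝ (⊤ : ℕ∞) F S) (a : Fin 4) : ContDiffOn ℝ (⊤ : ℕ∞) (pd4 a F) S := by
  have h1 : ContDiffOn ℝ (⊤ : ℕ∞) (fderiv ℝ F) S := hF.fderiv_of_isOpen hS (by simp)
  exact h1.clm_apply contDiffOn_const

lemma diffAt_of_cdOn {F : Pt2 → ℝ} {U : Set Pt2} {x : Pt2} (hU : IsOpen U)
    (hF : ContDiffOn ℝ (⊤ : ℕ∞) F U) (hx : x ∈ U) : DifferentiableAt ℝ F x :=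
  (hF.contDiffAt (hU.mem_nhds hx)).differentiableAt (by simp)

lemma diffAt_of_cdOn4 {F : Pt4 → ℝ} {S : Set Pt4} {p : Pt4} (hS : IsOpen S)
    (hF : ContDiffOn ℝ (⊤ : ℕ∞) F S) (hp : p ∈ S) : DifferentiableAt ℝ F p :=
  (hF.contDiffAt (hS.mem_nhds hp)).differentiableAt (by simp)

lemma pd4_symm {f : Pt4 → ℝ} {p : Pt4} (hf : ContDiffAt ℝ (⊤ : ℕ∞) f p) (a b : Fin 4) :
    pd4 a (pd4 b f) p = pd4 b (pd4 a f) p := by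
  have hd : DifferentiableAt ℝ (fderiv ℝ f) p :=
    (hf.fderiv_right (m := 1) (WithTop.coe_le_coe.mpr le_top)).differentiableAt one_ne_zero
  have key : ∀ c d : Fin 4,
      pd4 c (pd4 d f) p = fderiv ℝ (fderiv ℝ f) p (Pi.single c 1) (Pi.single d 1) := by
    intro c d
    unfold pd4
    rw [fderiv_clm_apply hd (differentiableAt_const _)]
    simp [ContinuousLinearMap.flip_apply, fderiv_const]
  rw [key, key]
  exact (hf.isSymmSndFDerivAt (by simp; exact (WithTop.coe_le_coe.mpr (le_top : (2:ℕ∞) ≤ ⊤) : _))) _ _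

lemma clm_ext2 {L : Pt2 →L[ℝ] ℝ} (h : ∀ r : Fin 2, L (Pi.single r 1) = 0) : L = 0 := by
  ext v
  have : v = ∑ r : Fin 2, Pi.single r (v r) := (Finset.univ_sum_single v).symm
  rw [this]
  have e : ∀ r : Fin 2, (Pi.single r (v r) : Pt2) = v r • (Pi.single r 1 : Pt2) := by
    intro r; funext s; simp [Pi.single_apply, Pi.smul_apply]
  simp [Fin.sum_univ_two, e, map_add, map_smul, h]

lemma glue_zero (x : Pt2) : glue x 0 = bInclL x := by rw [glue_eq]; simp

lemma hasFDerivAt_glue_right {g : Pt4 → ℝ} {x v : Pt2} (hg : DifferentiableAt ℝ g (glue x v)) :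
    HasFDerivAt (fun w => g (glue x w)) ((fderiv ℝ g (glue x v)).comp inclL) v := by
  have e : (fun w => g (glue x w)) = fun w => g (bInclL x + inclL w) := by
    funext w; rw [glue_eq]
  rw [e]
  have h2 : HasFDerivAt (fun w : Pt2 => bInclL x + inclL w) inclL v :=
    inclL.hasFDerivAt.const_add (bInclL x)
  have h1 : HasFDerivAt g (fderiv ℝ g (glue x v)) (bInclL x + inclL v) := by
    rw [← glue_eq]; exact hg.hasFDerivAt
  exact h1.comp v h2

lemma pd2_comp_glue0 {g : Pt4 → ℝ} {x : Pt2} (hg : DifferentiableAt ℝ g (glue x 0)) (j : Fin 2) :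
    pd2 j (fun y => g (glue y 0)) x = pd4 (unp j) g (glue x 0) := by
  have e : (fun y : Pt2 => g (glue y 0)) = fun y => g (bInclL y) := by
    funext y; rw [glue_zero]
  have hb : HasFDerivAt g (fderiv ℝ g (glue x 0)) (bInclL x) := by
    rw [← glue_zero]; exact hg.hasFDerivAt
  have h1 : HasFDerivAt (fun y : Pt2 => g (bInclL y))
      ((fderiv ℝ g (glue x 0)).comp bInclL) x := hb.comp x bInclL.hasFDerivAt
  rw [e, pd2_of_hasFDerivAt h1]
  simp [ContinuousLinearMap.comp_apply, bInclL_single, pd4]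

/-- A function on the total space whose fiber partial derivatives are given constants
is affine along each fiber. -/
lemma fiber_affine {g : Pt4 → ℝ} {x : Pt2} (hg : ∀ v : Pt2, DifferentiableAt ℝ g (glue x v))
    (c : Fin 2 → ℝ) (hc : ∀ (v : Pt2) (r : Fin 2), pd4 (pr r) g (glue x v) = c r) :
    ∀ v : Pt2, g (glue x v) = g (glue x 0) + ∑ r : Fin 2, c r * v r := by
  have hco : ∀ (r : Fin 2) (w : Pt2), HasFDerivAt (fun v : Pt2 => v r)
      (ContinuousLinearMap.proj (R := ℝ) (φ := fun _ : Fin 2 => ℝ) r) w := by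
    intro r w
    have key : (fun v : Pt2 => v r)
        = ⇑(ContinuousLinearMap.proj (R := ℝ) (φ := fun _ : Fin 2 => ℝ) r) := rfl
    rw [key]; exact ContinuousLinearMap.hasFDerivAt _
  set Lc : Pt2 →L[ℝ] ℝ :=
    c 0 • (ContinuousLinearMap.proj (R := ℝ) (φ := fun _ : Fin 2 => ℝ) 0)
      + c 1 • (ContinuousLinearMap.proj (R := ℝ) (φ := fun _ : Fin 2 => ℝ) 1) with hLcdef
  have hLc : ∀ w : Pt2, HasFDerivAt (fun v : Pt2 => ∑ r : Fin 2, c r * v r) Lc w := by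
    intro w
    have h0 : HasFDerivAt (fun v : Pt2 => c 0 * v 0)
        (c 0 • (ContinuousLinearMap.proj (R := ℝ) (φ := fun _ : Fin 2 => ℝ) 0)) w :=
      (hco 0 w).const_mul (c 0)
    have h1 : HasFDerivAt (fun v : Pt2 => c 1 * v 1)
        (c 1 • (ContinuousLinearMap.proj (R := ℝ) (φ := fun _ : Fin 2 => ℝ) 1)) w :=
      (hco 1 w).const_mul (c 1)
    have := h0.add h1
    simpa [Fin.sum_univ_two, Pi.add_def] using this
  set φ := fun v : Pt2 => g (glue x v) - ∑ r : Fin 2, c r * v r with hφdef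
  have hφ : ∀ v : Pt2, HasFDerivAt φ ((fderiv ℝ g (glue x v)).comp inclL - Lc) v :=
    fun v => (hasFDerivAt_glue_right (hg v)).sub (hLc v)
  have hzero : ∀ v : Pt2, fderiv ℝ φ v = 0 := by
    intro v
    rw [(hφ v).fderiv]
    have : ((fderiv ℝ g (glue x v)).comp inclL - Lc) = 0 := by
      apply clm_ext2
      intro r
      have e1 : (fderiv ℝ g (glue x v)).comp inclL (Pi.single r 1)
          = pd4 (pr r) g (glue x v) := by
        simp [ContinuousLinearMap.comp_apply, inclL_single, pd4]
      have e2 : Lc (Pi.single r 1) = c r := by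
        rw [hLcdef]
        fin_cases r <;>
          simp [ContinuousLinearMap.add_apply, ContinuousLinearMap.proj_apply,
            Pi.single_apply]
      simp [ContinuousLinearMap.sub_apply, e1, e2, hc v r]
    rw [this]
  have hconst : ∀ v : Pt2, φ v = φ 0 := by
    intro v
    exact is_const_of_fderiv_eq_zero (fun w => (hφ w).differentiableAt) hzero v 0
  intro v
  have := hconst v
  simp only [hφdef] at this
  have h0 : ∑ r : Fin 2, c r * (0 : Pt2) r = 0 := by simp
  rw [h0] at this
  linarith [this]
section GGEval

variable (Γ : Fin 2 → Fin 2 → Fin 2 → Pt2 → ℝ) (Φ : Fin 2 → Fin 2 → Pt2 → ℝ)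

lemma not_pr_lt (i : Fin 2) : ¬ (pr i).1 < 2 := by simp [pr]

lemma GG_uuu (k i j : Fin 2) (q : Pt4) :
    GG Γ Φ (unp k) (unp i) (unp j) q = Γ k i j (base q) := by
  unfold GG
  rw [dif_pos (show (unp k).1 < 2 from k.isLt), dif_pos (show (unp i).1 < 2 from i.isLt),
    dif_pos (show (unp j).1 < 2 from j.isLt)]
  rfl

lemma GG_puu (k i j : Fin 2) (q : Pt4) :
    GG Γ Φ (pr k) (unp i) (unp j) q = GammaPr Γ Φ k i j q := by
  unfold GG
  rw [dif_neg (not_pr_lt k), dif_pos (show (unp i).1 < 2 from i.isLt),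
    dif_pos (show (unp j).1 < 2 from j.isLt)]
  rfl

lemma GG_ppu (k i j : Fin 2) (q : Pt4) :
    GG Γ Φ (pr k) (pr i) (unp j) q = -Γ i j k (base q) := by
  unfold GG
  rw [dif_neg (not_pr_lt k), dif_neg (not_pr_lt i), dif_pos (show (unp j).1 < 2 from j.isLt)]
  rfl

lemma GG_pup (k i j : Fin 2) (q : Pt4) :
    GG Γ Φ (pr k) (unp i) (pr j) q = -Γ j i k (base q) := by
  unfold GG
  rw [dif_neg (not_pr_lt k), dif_pos (show (unp i).1 < 2 from i.isLt), dif_neg (not_pr_lt j)]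
  rfl

lemma GG_Z1 (k : Fin 2) (i : Fin 2) (c : Fin 4) (q : Pt4) :
    GG Γ Φ (unp k) (pr i) c q = 0 := by
  unfold GG
  rw [dif_pos (show (unp k).1 < 2 from k.isLt), dif_neg (not_pr_lt i)]

lemma GG_Z2 (k i j : Fin 2) (q : Pt4) : GG Γ Φ (unp k) (unp i) (pr j) q = 0 := by
  unfold GG
  rw [dif_pos (show (unp k).1 < 2 from k.isLt), dif_pos (show (unp i).1 < 2 from i.isLt),
    dif_neg (not_pr_lt j)]

lemma GG_Z3 (k i j : Fin 2) (q : Pt4) : GG Γ Φ (pr k) (pr i) (pr j) q = 0 := by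
  unfold GG
  rw [dif_neg (not_pr_lt k), dif_neg (not_pr_lt i), dif_neg (not_pr_lt j)]

lemma sum4 (F : Fin 4 → ℝ) :
    ∑ c : Fin 4, F c = F (unp 0) + F (unp 1) + F (pr 0) + F (pr 1) := by
  rw [Fin.sum_univ_four]; rfl

lemma gDE_pp (i j : Fin 2) (p : Pt4) : gDE Γ Φ (pr i) (pr j) p = 0 := by
  unfold gDE
  rw [dif_neg (not_pr_lt i), if_neg (not_pr_lt j)]

lemma gDE_pu (i j : Fin 2) (p : Pt4) :
    gDE Γ Φ (pr i) (unp j) p = if i = j then 1 else 0 := by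
  unfold gDE
  rw [dif_neg (not_pr_lt i), if_pos (show (unp j).1 < 2 from j.isLt)]
  congr 1
  simp only [eq_iff_iff]
  constructor
  · intro h
    have : (pr i).1 = (unp j).1 + 2 := h
    simp [pr, unp] at this; ext; omega
  · rintro rfl; rfl

lemma gDE_uu (i j : Fin 2) (p : Pt4) :
    gDE Γ Φ (unp i) (unp j) p
      = Φ i j (base p) - 2 * ∑ r : Fin 2, p (pr r) * Γ r i j (base p) := by
  unfold gDE
  rw [dif_pos (show (unp i).1 < 2 from i.isLt), dif_pos (show (unp j).1 < 2 from j.isLt)]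
  rfl

lemma hess4_pp (f : Pt4 → ℝ) (i j : Fin 2) (p : Pt4) :
    hess4 Γ Φ f (pr i) (pr j) p = pd4 (pr i) (pd4 (pr j) f) p := by
  unfold hess4
  rw [sum4 (fun c => GG Γ Φ c (pr i) (pr j) p * pd4 c f p)]
  rw [GG_Z1, GG_Z1, GG_Z3, GG_Z3]
  ring

lemma hess4_pu (f : Pt4 → ℝ) (i j : Fin 2) (p : Pt4) :
    hess4 Γ Φ f (pr i) (unp j) p
      = pd4 (pr i) (pd4 (unp j) f) p + ∑ k : Fin 2, Γ i j k (base p) * pd4 (pr k) f p := by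
  unfold hess4
  rw [sum4 (fun c => GG Γ Φ c (pr i) (unp j) p * pd4 c f p)]
  rw [GG_Z1, GG_Z1, GG_ppu, GG_ppu, Fin.sum_univ_two]
  ring

lemma hess4_uu (f : Pt4 → ℝ) (i j : Fin 2) (p : Pt4) :
    hess4 Γ Φ f (unp i) (unp j) p
      = pd4 (unp i) (pd4 (unp j) f) p - ∑ k : Fin 2, Γ k i j (base p) * pd4 (unp k) f p
        - ∑ k : Fin 2, GammaPr Γ Φ k i j p * pd4 (pr k) f p := by
  unfold hess4
  rw [sum4 (fun c => GG Γ Φ c (unp i) (unp j) p * pd4 c f p)]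
  rw [GG_uuu, GG_uuu, GG_puu, GG_puu, Fin.sum_univ_two, Fin.sum_univ_two]
  ring

end GGEval
section Ricci

variable {U : Set Pt2} (Γ : Fin 2 → Fin 2 → Fin 2 → Pt2 → ℝ) (Φ : Fin 2 → Fin 2 → Pt2 → ℝ)

lemma pd4_funzero {g : Pt4 → ℝ} (hg : ∀ q, g q = 0) (a : Fin 4) (p : Pt4) :
    pd4 a g p = 0 := by
  have : g = fun _ => (0:ℝ) := funext hg
  rw [this, pd4_const]

lemma trace_zero_pr (j : Fin 2) (q : Pt4) :
    (∑ c : Fin 4, GG Γ Φ c c (pr j) q) = 0 := by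
  rw [sum4 (fun c => GG Γ Φ c c (pr j) q), GG_Z2, GG_Z2, GG_Z3, GG_Z3]; ring

lemma ricci4_pp (i j : Fin 2) (p : Pt4) : ricci4 Γ Φ (pr i) (pr j) p = 0 := by
  unfold ricci4
  rw [sum4 (fun c => pd4 c (GG Γ Φ c (pr i) (pr j)) p)]
  rw [pd4_funzero (fun q => GG_Z1 Γ Φ 0 i (pr j) q) (unp 0) p,
    pd4_funzero (fun q => GG_Z1 Γ Φ 1 i (pr j) q) (unp 1) p,
    pd4_funzero (fun q => GG_Z3 Γ Φ 0 i j q) (pr 0) p,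
    pd4_funzero (fun q => GG_Z3 Γ Φ 1 i j q) (pr 1) p]
  rw [pd4_funzero (g := fun q => ∑ c : Fin 4, GG Γ Φ c c (pr j) q)
    (trace_zero_pr Γ Φ j) (pr i) p]
  simp only [sum4, GG_Z1, GG_Z2, GG_Z3, GG_uuu, GG_puu, GG_ppu, GG_pup]
  ring

lemma trace_zero (hΓsym : ∀ k i j, Γ k i j = Γ k j i) (j : Fin 2) (q : Pt4) :
    (∑ c : Fin 4, GG Γ Φ c c (unp j) q) = 0 := by
  rw [sum4 (fun c => GG Γ Φ c c (unp j) q), GG_uuu, GG_uuu, GG_ppu, GG_ppu,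
    hΓsym 0 j 0, hΓsym 1 j 1]
  ring

lemma ricci4_pu (hU : IsOpen U) (hΓs : ∀ k i j, ContDiffOn ℝ (⊤ : ℕ∞) (Γ k i j) U)
    (hΓsym : ∀ k i j, Γ k i j = Γ k j i) {p : Pt4} (hp : base p ∈ U) (i j : Fin 2) :
    ricci4 Γ Φ (pr i) (unp j) p = 0 := by
  have dΓ : ∀ a b c : Fin 2, DifferentiableAt ℝ (fun y => -Γ a b c y) (base p) :=
    fun a b c => (diffAt_of_cdOn hU (hΓs a b c) hp).neg
  unfold ricci4
  rw [sum4 (fun c => pd4 c (GG Γ Φ c (pr i) (unp j)) p)]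
  rw [pd4_funzero (fun q => GG_Z1 Γ Φ 0 i (unp j) q) (unp 0) p,
    pd4_funzero (fun q => GG_Z1 Γ Φ 1 i (unp j) q) (unp 1) p]
  have e0 : GG Γ Φ (pr 0) (pr i) (unp j) = fun q => (fun y => -Γ i j 0 y) (base q) :=
    funext fun q => GG_ppu Γ Φ 0 i j q
  have e1 : GG Γ Φ (pr 1) (pr i) (unp j) = fun q => (fun y => -Γ i j 1 y) (base q) :=
    funext fun q => GG_ppu Γ Φ 1 i j q
  rw [e0, e1, pd4_base_pr (dΓ i j 0) 0, pd4_base_pr (dΓ i j 1) 1]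
  rw [pd4_funzero (g := fun q => ∑ c : Fin 4, GG Γ Φ c c (unp j) q)
    (trace_zero Γ Φ hΓsym j) (pr i) p]
  simp only [sum4, GG_Z1, GG_Z2, GG_Z3, GG_uuu, GG_puu, GG_ppu, GG_pup]
  ring

/-- The fiber-direction derivative of `GammaPr`. -/
lemma pd4_GammaPr (hU : IsOpen U) (hΓs : ∀ k i j, ContDiffOn ℝ (⊤ : ℕ∞) (Γ k i j) U)
    (hΦs : ∀ i j, ContDiffOn ℝ (⊤ : ℕ∞) (Φ i j) U) {p : Pt4} (hp : base p ∈ U) (m i j s : Fin 2) :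
    pd4 (pr s) (GammaPr Γ Φ m i j) p
      = pd2 m (Γ s i j) (base p) - pd2 i (Γ s j m) (base p) - pd2 j (Γ s i m) (base p)
        + 2 * ∑ l : Fin 2, Γ s m l (base p) * Γ l i j (base p) := by
  have dΓ : ∀ a b c : Fin 2, DifferentiableAt ℝ (Γ a b c) (base p) :=
    fun a b c => diffAt_of_cdOn hU (hΓs a b c) hp
  have dΦ : ∀ a b : Fin 2, DifferentiableAt ℝ (Φ a b) (base p) :=
    fun a b => diffAt_of_cdOn hU (hΦs a b) hp
  have dpΓ : ∀ (n : Fin 2) (a b c : Fin 2), DifferentiableAt ℝ (pd2 n (Γ a b c)) (base p) :=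
    fun n a b c => diffAt_of_cdOn hU (contDiffOn_pd2 hU (hΓs a b c) n) hp
  have dpΦ : ∀ (n : Fin 2) (a b : Fin 2), DifferentiableAt ℝ (pd2 n (Φ a b)) (base p) :=
    fun n a b => diffAt_of_cdOn hU (contDiffOn_pd2 hU (hΦs a b) n) hp
  set C : Fin 2 → Pt2 → ℝ := fun r y =>
    pd2 m (Γ r i j) y - pd2 i (Γ r j m) y - pd2 j (Γ r i m) y
      + 2 * (Γ r m 0 y * Γ 0 i j y + Γ r m 1 y * Γ 1 i j y) with hC
  set D : Pt2 → ℝ := fun y =>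
    (1/2) * (pd2 i (Φ j m) y + pd2 j (Φ i m) y - pd2 m (Φ i j) y)
      - (Φ m 0 y * Γ 0 i j y + Φ m 1 y * Γ 1 i j y) with hD
  have e : GammaPr Γ Φ m i j = fun q => (∑ r : Fin 2, q (pr r) * C r (base q)) + D (base q) := by
    funext q
    unfold GammaPr
    rw [hC, hD]
    simp only [Fin.sum_univ_two]
    ring
  have hCd : ∀ r : Fin 2, DifferentiableAt ℝ (C r) (base p) := by
    intro r
    rw [hC]
    exact (((dpΓ m r i j).sub (dpΓ i r j m)).sub (dpΓ j r i m)).add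
      ((((dΓ r m 0).mul (dΓ 0 i j)).add ((dΓ r m 1).mul (dΓ 1 i j))).const_mul 2)
  have hDd : DifferentiableAt ℝ D (base p) := by
    rw [hD]
    exact ((((dpΦ i j m).add (dpΦ j i m)).sub (dpΦ m i j)).const_mul (1/2)).sub
      (((dΦ m 0).mul (dΓ 0 i j)).add ((dΦ m 1).mul (dΓ 1 i j)))
  rw [e, pd4_affine_pr C D hCd hDd s, hC]
  simp only [Fin.sum_univ_two]

/-- The base-base component of the Ricci tensor of the deformed Riemannian extension
is twice the symmetrized Ricci tensor of `D`. -/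
lemma ricci4_uu (hU : IsOpen U) (hΓs : ∀ k i j, ContDiffOn ℝ (⊤ : ℕ∞) (Γ k i j) U)
    (hΓsym : ∀ k i j, Γ k i j = Γ k j i) (hΦs : ∀ i j, ContDiffOn ℝ (⊤ : ℕ∞) (Φ i j) U)
    {p : Pt4} (hp : base p ∈ U) (i j : Fin 2) :
    ricci4 Γ Φ (unp i) (unp j) p = 2 * ricciDSym Γ i j (base p) := by
  have dΓ : ∀ a b c : Fin 2, DifferentiableAt ℝ (Γ a b c) (base p) :=
    fun a b c => diffAt_of_cdOn hU (hΓs a b c) hp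
  unfold ricci4
  rw [sum4 (fun c => pd4 c (GG Γ Φ c (unp i) (unp j)) p)]
  have e0 : GG Γ Φ (unp 0) (unp i) (unp j) = fun q => Γ 0 i j (base q) :=
    funext fun q => GG_uuu Γ Φ 0 i j q
  have e1 : GG Γ Φ (unp 1) (unp i) (unp j) = fun q => Γ 1 i j (base q) :=
    funext fun q => GG_uuu Γ Φ 1 i j q
  have e2 : GG Γ Φ (pr 0) (unp i) (unp j) = GammaPr Γ Φ 0 i j :=
    funext fun q => GG_puu Γ Φ 0 i j q
  have e3 : GG Γ Φ (pr 1) (unp i) (unp j) = GammaPr Γ Φ 1 i j :=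
    funext fun q => GG_puu Γ Φ 1 i j q
  rw [e0, e1, e2, e3, pd4_base_unp (dΓ 0 i j) 0, pd4_base_unp (dΓ 1 i j) 1,
    pd4_GammaPr Γ Φ hU hΓs hΦs hp 0 i j 0, pd4_GammaPr Γ Φ hU hΓs hΦs hp 1 i j 1]
  rw [pd4_funzero (g := fun q => ∑ c : Fin 4, GG Γ Φ c c (unp j) q)
    (trace_zero Γ Φ hΓsym j) (unp i) p]
  -- the quadratic terms
  simp only [sum4, GG_Z1, GG_Z2, GG_Z3, GG_uuu, GG_puu, GG_ppu, GG_pup]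
  -- now expand the target
  unfold ricciDSym ricciD
  have tr : ∀ a b : Fin 2, pd2 a (fun q => ∑ k : Fin 2, Γ k k b q) (base p)
      = pd2 a (Γ 0 0 b) (base p) + pd2 a (Γ 1 1 b) (base p) := by
    intro a b
    have : (fun q => ∑ k : Fin 2, Γ k k b q) = fun q => Γ 0 0 b q + Γ 1 1 b q := by
      funext q; rw [Fin.sum_univ_two]
    rw [this, pd2_add (dΓ 0 0 b) (dΓ 1 1 b) a]
  rw [tr i j, tr j i]
  simp only [Fin.sum_univ_two]
  fin_cases i <;> fin_cases j <;>
    simp only [Fin.isValue, Fin.mk_zero, Fin.mk_one, hΓsym 0 1 0, hΓsym 1 1 0] <;> ring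

end Ricci

lemma GammaPr_diff (Γ' : Fin 2 → Fin 2 → Fin 2 → Pt2 → ℝ) (Φ' : Fin 2 → Fin 2 → Pt2 → ℝ)
    (k i j s : Fin 2) (x : Pt2) :
    GammaPr Γ' Φ' k i j (glue x (Pi.single s 1)) - GammaPr Γ' Φ' k i j (glue x 0)
      = pd2 k (Γ' s i j) x - pd2 i (Γ' s j k) x - pd2 j (Γ' s i k) x
        + 2 * ∑ l : Fin 2, Γ' s k l x * Γ' l i j x := by
  unfold GammaPr
  simp only [base_glue, glue_pr, Fin.sum_univ_two]
  fin_cases s <;> simp [Pi.single_apply] <;> ring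
/-- If the symmetrized Ricci tensor `ρ^{D,sym}` of `D` is nonzero at every
point of the open connected set `U` and `(T*Σ, g_{D,Φ}, f)` is a gradient Ricci soliton,
then `λ = 0` (the soliton is steady), `f = π*h` is independent of the fiber coordinates,
and `h` satisfies the affine gradient Ricci soliton equation on `U`. -/
theorem stmt5 (U : Set Pt2) (hU : IsOpen U) (hUconn : IsConnected U)
    (Γ : Fin 2 → Fin 2 → Fin 2 → Pt2 → ℝ)
    (hΓsmooth : ∀ k i j, ContDiffOn ℝ (⊤ : ℕ∞) (Γ k i j) U)
    (hΓsym : ∀ k i j, Γ k i j = Γ k j i)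
    (Φ : Fin 2 → Fin 2 → Pt2 → ℝ)
    (hΦsmooth : ∀ i j, ContDiffOn ℝ (⊤ : ℕ∞) (Φ i j) U)
    (hΦsym : ∀ i j, Φ i j = Φ j i)
    (hρ : ∀ q ∈ U, ∃ i j : Fin 2, ricciDSym Γ i j q ≠ 0)
    (f : Pt4 → ℝ) (hf : ContDiffOn ℝ (⊤ : ℕ∞) f {p : Pt4 | base p ∈ U}) (lam : ℝ)
    (hsol : ∀ p : Pt4, base p ∈ U → ∀ a b : Fin 4,
      hess4 Γ Φ f a b p + ricci4 Γ Φ a b p = lam * gDE Γ Φ a b p) :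
    lam = 0 ∧
    ∃ h : Pt2 → ℝ, ContDiffOn ℝ (⊤ : ℕ∞) h U ∧
      (∀ p : Pt4, base p ∈ U → f p = h (base p)) ∧
      (∀ q ∈ U, ∀ i j : Fin 2, hessD Γ h i j q + 2 * ricciDSym Γ i j q = 0) := by
  set S : Set Pt4 := {p : Pt4 | base p ∈ U} with hSdef
  have hS : IsOpen S := by
    have : S = baseL ⁻¹' U := by
      ext q; simp [hSdef, Set.mem_preimage, base_eq]
    rw [this]
    exact hU.preimage baseL.continuous
  have hmemS : ∀ (x : Pt2), x ∈ U → ∀ (v : Pt2), glue x v ∈ S := by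
    intro x hx v; show base (glue x v) ∈ U; rwa [base_glue]
  have hfC : ∀ p ∈ S, ContDiffAt ℝ (⊤ : ℕ∞) f p := fun p hp => hf.contDiffAt (hS.mem_nhds hp)
  have hfd1 : ∀ b : Fin 4, ContDiffOn ℝ (⊤ : ℕ∞) (pd4 b f) S := fun b => contDiffOn_pd4 hS hf b
  -- Step 1: the (i',j') equations
  have step1 : ∀ p ∈ S, ∀ i j : Fin 2, pd4 (pr i) (pd4 (pr j) f) p = 0 := by
    intro p hp i j
    have h := hsol p hp (pr i) (pr j)
    rw [hess4_pp, ricci4_pp, gDE_pp] at h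
    linarith
  -- the fiber functions
  set a : Fin 2 → Pt2 → ℝ := fun r x => pd4 (pr r) f (glue x 0) with hadef
  set h0 : Pt2 → ℝ := fun x => f (glue x 0) with h0def
  -- E0 : fiber derivatives are constant along fibers
  have hE0 : ∀ x ∈ U, ∀ (v : Pt2) (r : Fin 2), pd4 (pr r) f (glue x v) = a r x := by
    intro x hx v r
    have := fiber_affine (g := pd4 (pr r) f) (x := x)
      (fun w => diffAt_of_cdOn4 hS (hfd1 (pr r)) (hmemS x hx w))
      (fun _ => 0) (fun w s => step1 (glue x w) (hmemS x hx w) s r) v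
    simpa using this
  have hE0' : ∀ p ∈ S, ∀ r : Fin 2, pd4 (pr r) f p = a r (base p) := by
    intro p hp r
    have e := glue_base_fib p
    calc pd4 (pr r) f p = pd4 (pr r) f (glue (base p) (fun s => p (pr s))) := by rw [e]
    _ = a r (base p) := hE0 (base p) hp _ r
  -- smoothness of a and h0
  have hmaps : Set.MapsTo (fun x => bInclL x) U S := by
    intro x hx
    show base (bInclL x) ∈ U
    rw [← glue_zero, base_glue]; exact hx
  have haC : ∀ r : Fin 2, ContDiffOn ℝ (⊤ : ℕ∞) (a r) U := by
    intro r
    have : a r = fun x => pd4 (pr r) f (bInclL x) := by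
      funext x; rw [hadef]; simp only [glue_zero]
    rw [this]
    exact (hfd1 (pr r)).comp (bInclL.contDiff.contDiffOn) hmaps
  have hh0C : ContDiffOn ℝ (⊤ : ℕ∞) h0 U := by
    have : h0 = fun x => f (bInclL x) := by
      funext x; rw [h0def]; simp only [glue_zero]
    rw [this]
    exact hf.comp (bInclL.contDiff.contDiffOn) hmaps
  -- M' : the mixed soliton equation on the base
  have hM' : ∀ x ∈ U, ∀ i j : Fin 2,
      pd2 j (a i) x + (∑ k : Fin 2, Γ i j k x * a k x) = lam * (if i = j then 1 else 0) := by
    intro x hx i j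
    have h := hsol (glue x 0) (by rwa [base_glue]) (pr i) (unp j)
    rw [hess4_pu, ricci4_pu Γ Φ hU hΓsmooth hΓsym (by rwa [base_glue]),
      gDE_pu, base_glue] at h
    have hsym : pd4 (pr i) (pd4 (unp j) f) (glue x 0) = pd4 (unp j) (pd4 (pr i) f) (glue x 0) :=
      pd4_symm (hfC _ (hmemS x hx 0)) (pr i) (unp j)
    have hgl : pd4 (unp j) (pd4 (pr i) f) (glue x 0) = pd2 j (a i) x := by
      rw [← pd2_comp_glue0 (diffAt_of_cdOn4 hS (hfd1 (pr i)) (hmemS x hx 0)) j]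
    rw [hsym, hgl] at h
    have hval : ∀ k : Fin 2, pd4 (pr k) f (glue x 0) = a k x := fun k => rfl
    simp only [hval] at h
    linarith [h]
  -- E2 : base derivatives are affine along fibers
  have hE2 : ∀ x ∈ U, ∀ (v : Pt2) (j : Fin 2),
      pd4 (unp j) f (glue x v) = pd2 j h0 x + ∑ r : Fin 2, pd2 j (a r) x * v r := by
    intro x hx v j
    have hc : ∀ (w : Pt2) (r : Fin 2),
        pd4 (pr r) (pd4 (unp j) f) (glue x w) = pd2 j (a r) x := by
      intro w r
      have hsymq := pd4_symm (hfC _ (hmemS x hx w)) (pr r) (unp j)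
      have hev : pd4 (pr r) f =ᶠ[nhds (glue x w)] (fun q => a r (base q)) :=
        Filter.eventuallyEq_of_mem (hS.mem_nhds (hmemS x hx w)) (fun q hq => hE0' q hq r)
      rw [hsymq, pd4_congr_nhds hev (unp j),
        pd4_base_unp (by rw [base_glue]; exact diffAt_of_cdOn hU (haC r) hx) j, base_glue]
    have := fiber_affine (g := pd4 (unp j) f) (x := x)
      (fun w => diffAt_of_cdOn4 hS (hfd1 (unp j)) (hmemS x hx w))
      (fun r => pd2 j (a r) x) hc v
    rw [this]
    have e0 : pd4 (unp j) f (glue x 0) = pd2 j h0 x := by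
      rw [← pd2_comp_glue0 (diffAt_of_cdOn4 hS hf (hmemS x hx 0)) j]
    rw [e0]
  have hE2' : ∀ p ∈ S, ∀ j : Fin 2,
      pd4 (unp j) f p = (∑ r : Fin 2, p (pr r) * pd2 j (a r) (base p)) + pd2 j h0 (base p) := by
    intro p hp j
    have e := glue_base_fib p
    have h := hE2 (base p) hp (fun s => p (pr s)) j
    rw [e] at h
    rw [h, Fin.sum_univ_two, Fin.sum_univ_two]
    ring
  -- E1 : f itself is affine along fibers
  have hE1 : ∀ x ∈ U, ∀ (v : Pt2), f (glue x v) = h0 x + ∑ r : Fin 2, a r x * v r := by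
    intro x hx v
    exact fiber_affine (g := f) (x := x)
      (fun w => diffAt_of_cdOn4 hS hf (hmemS x hx w))
      (fun r => a r x) (fun w r => hE0 x hx w r) v
  -- smoothness of derived base functions
  have hd2a : ∀ (j : Fin 2) (r : Fin 2), ContDiffOn ℝ (⊤ : ℕ∞) (pd2 j (a r)) U :=
    fun j r => contDiffOn_pd2 hU (haC r) j
  have hd2h0 : ∀ j : Fin 2, ContDiffOn ℝ (⊤ : ℕ∞) (pd2 j h0) U :=
    fun j => contDiffOn_pd2 hU hh0C j
  -- the base-base soliton equation, fully expanded
  have hEQ : ∀ x ∈ U, ∀ (v : Pt2) (i j : Fin 2),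
      ((∑ r : Fin 2, v r * pd2 i (pd2 j (a r)) x) + pd2 i (pd2 j h0) x)
        - (∑ k : Fin 2, Γ k i j x * (pd2 k h0 x + ∑ r : Fin 2, pd2 k (a r) x * v r))
        - (∑ k : Fin 2, GammaPr Γ Φ k i j (glue x v) * a k x)
        + 2 * ricciDSym Γ i j x
      = lam * (Φ i j x - 2 * ∑ r : Fin 2, v r * Γ r i j x) := by
    intro x hx v i j
    have hp : base (glue x v) ∈ U := by rwa [base_glue]
    have h := hsol (glue x v) hp (unp i) (unp j)
    rw [hess4_uu, ricci4_uu Γ Φ hU hΓsmooth hΓsym hΦsmooth hp, gDE_uu] at h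
    have hev : pd4 (unp j) f =ᶠ[nhds (glue x v)]
        (fun q => (∑ r : Fin 2, q (pr r) * pd2 j (a r) (base q)) + pd2 j h0 (base q)) :=
      Filter.eventuallyEq_of_mem (hS.mem_nhds (hmemS x hx v)) (fun q hq => hE2' q hq j)
    rw [pd4_congr_nhds hev (unp i),
      pd4_affine_unp (fun r => pd2 j (a r)) (pd2 j h0)
        (fun r => by rw [base_glue]; exact diffAt_of_cdOn hU (hd2a j r) hx)
        (by rw [base_glue]; exact diffAt_of_cdOn hU (hd2h0 j) hx) i] at h
    have hk : ∀ k : Fin 2, pd4 (unp k) f (glue x v)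
        = pd2 k h0 x + ∑ r : Fin 2, pd2 k (a r) x * v r := fun k => hE2 x hx v k
    have hk2 : ∀ k : Fin 2, pd4 (pr k) f (glue x v) = a k x := fun k => hE0 x hx v k
    simp only [hk, hk2, base_glue, glue_pr] at h
    simp only [Fin.sum_univ_two] at h ⊢
    linear_combination h
  -- first derivatives of a from M'
  have hdA : ∀ x ∈ U, ∀ i k : Fin 2, pd2 i (a k) x
      = lam * (if k = i then 1 else 0) - (Γ k i 0 x * a 0 x + Γ k i 1 x * a 1 x) := by
    intro x hx i k
    have := hM' x hx k i
    simp only [Fin.sum_univ_two] at this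
    linarith
  -- second derivatives of a by differentiating M'
  have hdd : ∀ x ∈ U, ∀ i j s : Fin 2, pd2 i (pd2 j (a s)) x
      = -(Γ s j 0 x * pd2 i (a 0) x + a 0 x * pd2 i (Γ s j 0) x
          + Γ s j 1 x * pd2 i (a 1) x + a 1 x * pd2 i (Γ s j 1) x) := by
    intro x hx i j s
    have dΓx : ∀ a' b' c' : Fin 2, DifferentiableAt ℝ (Γ a' b' c') x :=
      fun a' b' c' => diffAt_of_cdOn hU (hΓsmooth a' b' c') hx
    have dax : ∀ r : Fin 2, DifferentiableAt ℝ (a r) x :=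
      fun r => diffAt_of_cdOn hU (haC r) hx
    have hev : pd2 j (a s) =ᶠ[nhds x]
        (fun y => (fun _ : Pt2 => lam * (if s = j then 1 else 0)) y
          - (Γ s j 0 y * a 0 y + Γ s j 1 y * a 1 y)) := by
      apply Filter.eventuallyEq_of_mem (hU.mem_nhds hx)
      intro y hy
      have := hM' y hy s j
      simp only [Fin.sum_univ_two] at this
      show pd2 j (a s) y = lam * (if s = j then 1 else 0)
        - (Γ s j 0 y * a 0 y + Γ s j 1 y * a 1 y)
      linarith
    rw [pd2_congr_nhds hev i,
      pd2_sub (f := fun _ => lam * (if s = j then 1 else 0))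
        (g := fun y => Γ s j 0 y * a 0 y + Γ s j 1 y * a 1 y) (differentiableAt_const _)
        (((dΓx s j 0).mul (dax 0)).add ((dΓx s j 1).mul (dax 1))) i,
      pd2_const,
      pd2_add (f := fun y => Γ s j 0 y * a 0 y) (g := fun y => Γ s j 1 y * a 1 y)
        ((dΓx s j 0).mul (dax 0)) ((dΓx s j 1).mul (dax 1)) i,
      pd2_mul (dΓx s j 0) (dax 0) i, pd2_mul (dΓx s j 1) (dax 1) i]
    ring
  -- the linear-in-fiber part of the base-base equation
  have hC1 : ∀ x ∈ U, ∀ i j s : Fin 2,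
      pd2 i (pd2 j (a s)) x - (Γ 0 i j x * pd2 0 (a s) x + Γ 1 i j x * pd2 1 (a s) x)
        - ((pd2 0 (Γ s i j) x - pd2 i (Γ s j 0) x - pd2 j (Γ s i 0) x
            + 2 * (Γ s 0 0 x * Γ 0 i j x + Γ s 0 1 x * Γ 1 i j x)) * a 0 x
          + (pd2 1 (Γ s i j) x - pd2 i (Γ s j 1) x - pd2 j (Γ s i 1) x
            + 2 * (Γ s 1 0 x * Γ 0 i j x + Γ s 1 1 x * Γ 1 i j x)) * a 1 x)
        + 2 * lam * Γ s i j x = 0 := by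
    intro x hx i j s
    have e1 := hEQ x hx (Pi.single s 1) i j
    have e0 := hEQ x hx 0 i j
    have g0 := GammaPr_diff Γ Φ 0 i j s x
    have g1 := GammaPr_diff Γ Φ 1 i j s x
    simp only [Fin.sum_univ_two, Pi.zero_apply] at e1 e0 g0 g1
    fin_cases s <;>
      simp only [Fin.isValue, Fin.mk_zero, Fin.mk_one, Pi.single_apply, if_true,
        show ((1:Fin 2) = 0) ↔ False by decide, show ((0:Fin 2) = 1) ↔ False by decide,
        if_false, ite_false, reduceIte, mul_zero, zero_mul, mul_one, one_mul,
        add_zero, zero_add] at e1 e0 g0 g1 ⊢ <;>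
      linear_combination e1 - e0 + a 0 x * g0 + a 1 x * g1
  -- the fiber derivatives of f vanish
  have hA : ∀ x ∈ U, ∀ r : Fin 2, a r x = 0 := by
    intro x hx r
    by_contra hne
    have hR2 : ∀ i s rr : Fin 2,
        (pd2 0 (Γ s 1 i) x - pd2 1 (Γ s 0 i) x
          + (Γ s 0 0 x * Γ 0 1 i x + Γ s 0 1 x * Γ 1 1 i x
            - Γ s 1 0 x * Γ 0 0 i x - Γ s 1 1 x * Γ 1 0 i x)) * a rr x = 0 := by
      intro i s rr
      have e0 := hC1 x hx i 0 s
      have e1 := hC1 x hx i 1 s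
      rw [hdd x hx i 0 s] at e0
      rw [hdd x hx i 1 s] at e1
      simp only [hdA x hx] at e0 e1
      fin_cases i <;> fin_cases s <;> fin_cases rr <;>
        simp only [Fin.isValue, Fin.mk_zero, Fin.mk_one,
          show ((1:Fin 2) = 0) ↔ False by decide, show ((0:Fin 2) = 1) ↔ False by decide,
          if_false, ite_false, reduceIte, mul_zero, zero_mul,
          mul_one, one_mul, add_zero, zero_add, sub_zero] at e0 e1 ⊢ <;>
        simp only [hΓsym 0 1 0, hΓsym 1 1 0] at e0 e1 ⊢ <;>
        first
          | linear_combination e0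
          | linear_combination -e0
          | linear_combination e1
          | linear_combination -e1
    have hM0 : ∀ s i : Fin 2,
        pd2 0 (Γ s 1 i) x - pd2 1 (Γ s 0 i) x
          + (Γ s 0 0 x * Γ 0 1 i x + Γ s 0 1 x * Γ 1 1 i x
            - Γ s 1 0 x * Γ 0 0 i x - Γ s 1 1 x * Γ 1 0 i x) = 0 := by
      intro s i
      rcases mul_eq_zero.mp (hR2 i s r) with h | h
      · exact h
      · exact absurd h hne
    obtain ⟨i0, j0, hρ0⟩ := hρ x hx
    apply hρ0
    have dΓx : ∀ a' b' c' : Fin 2, DifferentiableAt ℝ (Γ a' b' c') x :=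
      fun a' b' c' => diffAt_of_cdOn hU (hΓsmooth a' b' c') hx
    have hric : ∀ i j : Fin 2, ricciD Γ i j x = 0 := by
      intro i j
      unfold ricciD
      have trfun : (fun q => ∑ k : Fin 2, Γ k k j q) = fun q => Γ 0 0 j q + Γ 1 1 j q := by
        funext q; rw [Fin.sum_univ_two]
      rw [trfun, pd2_add (dΓx 0 0 j) (dΓx 1 1 j) i]
      simp only [Fin.sum_univ_two]
      fin_cases i <;>
        simp only [Fin.isValue, Fin.mk_zero, Fin.mk_one] <;>
        first
          | linear_combination -(hM0 1 j)
          | linear_combination hM0 0 j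
    unfold ricciDSym
    rw [hric i0 j0, hric j0 i0]
    norm_num
  -- lam = 0
  obtain ⟨x0, hx0⟩ := hUconn.nonempty
  have hlam : lam = 0 := by
    have h := hM' x0 hx0 0 0
    have hz : pd2 0 (a 0) x0 = 0 := by
      have hev : a 0 =ᶠ[nhds x0] (fun _ => (0:ℝ)) :=
        Filter.eventuallyEq_of_mem (hU.mem_nhds hx0) (fun y hy => hA y hy 0)
      rw [pd2_congr_nhds hev 0, pd2_const]
    simp only [Fin.sum_univ_two, hz, hA x0 hx0 0, hA x0 hx0 1, if_pos rfl, if_true, ite_true,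
      mul_zero, zero_add, add_zero, mul_one] at h
    linarith
  refine ⟨hlam, h0, hh0C, ?_, ?_⟩
  · intro p hp
    have h := hE1 (base p) hp (fun s => p (pr s))
    rw [glue_base_fib p] at h
    rw [h, Fin.sum_univ_two, hA (base p) hp 0, hA (base p) hp 1]
    ring
  · intro q hq i j
    have e0 := hEQ q hq 0 i j
    unfold hessD
    simp only [Fin.sum_univ_two, Pi.zero_apply, mul_zero, zero_mul, add_zero, zero_add,
      sub_zero, hA q hq 0, hA q hq 1, hlam] at e0 ⊢
    linear_combination e0

end
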